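/- arXiv:1506.00369 — 3 statements merged into one kernel-verified Lean document; each statement's English description precedes it below -/
import Mathlib

section
/- Let (X, Σ, μ) be a σ-finite non-atomic measure space, and let Φ₁, Φ₂ be Young functions such that Φ₂ is not weaker than Φ₁ (i.e., there is no a > 0 and x₀ with Φ₂(x) ≤ Φ₁(ax) for all x ≥ x₀). If T is a non-singular measurable transformation of X and u a measurable function, then the only bounded weighted composition operator M_{u,T}f = u·(f∘T) from L^{Φ₁}(Σ) to L^{Φ₂}(Σ) is the zero operator. -/
/-! If `u` did not vanish a.e., then `F = {ε ≤ |u|}` has positive measure for some `ε > 0`, and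
the push-forward `ν` of `μ|F` under `T` is a non-zero measure with `ν ≪ μ`. Its Radon–Nikodym
density is at least some `δ > 0` on a set `A` of positive finite measure. Since `Φ₂ ⊀ Φ₁` and `A`
is non-atomic, there is a step function `g = ∑ yₙ 1_{Bₙ}` on disjoint `Bₙ ⊆ A` with
`∫ Φ₁(g) < ∞` but `∫_A Φ₂(k g) = ∞` for every `k > 0`: the heights `yₙ` come from the failure of
`Φ₂ ≺ Φ₁`, and the measures `μ Bₙ` are prescribed exactly by Sierpiński's theorem. Then
`∫ Φ₂(k u (g ∘ T)) dμ ≥ ∫ Φ₂(k ε g) dν ≥ δ ∫_A Φ₂(k ε g) dμ = ∞`, so `u (g ∘ T) ∉ L^{Φ₂}`. -/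

open MeasureTheory Filter Topology

/-- A Young function: continuous, convex, even, vanishing exactly at 0,
with superlinear growth at infinity. -/
structure YoungFunction where
  toFun : ℝ → ℝ
  continuous' : Continuous toFun
  convexOn' : ConvexOn ℝ Set.univ toFun
  even' : ∀ x, toFun (-x) = toFun x
  zero_iff' : ∀ x, toFun x = 0 ↔ x = 0
  tendsto_atTop' : Tendsto (fun x => toFun x / x) atTop atTop

instance : CoeFun YoungFunction fun _ => ℝ → ℝ := ⟨YoungFunction.toFun⟩

variable {X : Type*} [MeasurableSpace X]

/-- Membership in the Orlicz space `L^Φ(μ)`. -/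
def MemOrlicz (Φ : YoungFunction) (μ : Measure X) (f : X → ℝ) : Prop :=
  AEStronglyMeasurable f μ ∧ ∃ k > 0, Integrable (fun x => Φ (k * f x)) μ

/-- The Luxemburg norm on the Orlicz space `L^Φ(μ)`. -/
noncomputable def luxNorm (Φ : YoungFunction) (μ : Measure X) (f : X → ℝ) : ℝ :=
  sInf {k : ℝ | 0 < k ∧ ∫ x, Φ (f x / k) ∂μ ≤ 1}

/-- The generalized (right) inverse of a Young function on `[0,∞)`. -/
noncomputable def yInv (Φ : YoungFunction) (y : ℝ) : ℝ :=
  sSup {x : ℝ | 0 ≤ x ∧ Φ x ≤ y}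

/-- `Φ` satisfies the `Δ₂` condition globally. -/
def YoungDeltaTwo (Φ : YoungFunction) : Prop :=
  ∃ k > 0, ∀ x : ℝ, 0 ≤ x → Φ (2 * x) ≤ k * Φ x

/-- `Φ` satisfies the `Δ'` condition globally, with constant `c`. -/
def YoungDeltaPrime (Φ : YoungFunction) (c : ℝ) : Prop :=
  0 < c ∧ ∀ x y : ℝ, 0 ≤ x → 0 ≤ y → Φ (x * y) ≤ c * Φ x * Φ y

/-- `Φ` satisfies the `∇'` condition globally, with constant `b`. -/
def YoungNablaPrime (Φ : YoungFunction) (b : ℝ) : Prop :=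
  0 < b ∧ ∀ x y : ℝ, 0 ≤ x → 0 ≤ y → Φ x * Φ y ≤ Φ (b * x * y)

/-- `Φ ≺ Ψ` : `Φ` is weaker than `Ψ`. -/
def YoungWeaker (Φ Ψ : YoungFunction) : Prop :=
  ∃ a > 0, ∃ x₀ : ℝ, 0 ≤ x₀ ∧ ∀ x : ℝ, x₀ ≤ x → Φ x ≤ Ψ (a * x)

/-- `A` is an atom of the measure `μ`. -/
def IsAtomSet (μ : Measure X) (A : Set X) : Prop :=
  MeasurableSet A ∧ 0 < μ A ∧
    ∀ B : Set X, MeasurableSet B → B ⊆ A → μ B = 0 ∨ μ B = μ A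

/-- `μ` is non-atomic on the set `S`. -/
def NonAtomicOn (μ : Measure X) (S : Set X) : Prop :=
  ∀ A : Set X, A ⊆ S → ¬ IsAtomSet μ A

/-- A linear map between Orlicz spaces (given as a map on functions) is bounded. -/
def OrliczBounded (Φ₁ Φ₂ : YoungFunction) (μ : Measure X)
    (Tmap : (X → ℝ) → (X → ℝ)) : Prop :=
  ∃ C > 0, ∀ f : X → ℝ, MemOrlicz Φ₁ μ f →
    MemOrlicz Φ₂ μ (Tmap f) ∧ luxNorm Φ₂ μ (Tmap f) ≤ C * luxNorm Φ₁ μ f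

/-- The atomic decomposition of a σ-finite measure space: `X = (⋃ n, A n) ∪ B`
with the `A n` pairwise disjoint atoms of finite measure and `B` non-atomic. -/
def AtomicDecomposition (μ : Measure X) (A : ℕ → Set X) (B : Set X) : Prop :=
  (∀ n, IsAtomSet μ (A n)) ∧ (∀ n, μ (A n) < ⊤) ∧
    Pairwise (Function.onFun Disjoint A) ∧ (∀ n, Disjoint (A n) B) ∧
    MeasurableSet B ∧ NonAtomicOn μ B ∧ (⋃ n, A n) ∪ B = Set.univ

open scoped ENNReal NNReal
open Set Function

namespace YoungFunction

variable (Φ : YoungFunction)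

@[fun_prop]
theorem continuous : Continuous Φ := Φ.continuous'

theorem map_zero : Φ 0 = 0 := (Φ.zero_iff' 0).2 rfl

theorem nonneg (x : ℝ) : 0 ≤ Φ x := by
  have h := Φ.convexOn'.2 (mem_univ x) (mem_univ (-x)) (by norm_num : (0 : ℝ) ≤ 1 / 2)
    (by norm_num : (0 : ℝ) ≤ 1 / 2) (by norm_num)
  rw [smul_neg, add_neg_cancel, Φ.even', smul_eq_mul] at h
  linarith [Φ.map_zero]

theorem pos {x : ℝ} (hx : x ≠ 0) : 0 < Φ x :=
  (Φ.nonneg x).lt_of_ne fun h => hx ((Φ.zero_iff' x).1 h.symm)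

theorem map_mul_le {c : ℝ} (hc0 : 0 ≤ c) (hc1 : c ≤ 1) (x : ℝ) : Φ (c * x) ≤ c * Φ x := by
  simpa [Φ.map_zero] using
    Φ.convexOn'.2 (mem_univ x) (mem_univ 0) hc0 (sub_nonneg.2 hc1) (add_sub_cancel c 1)

theorem map_abs (x : ℝ) : Φ |x| = Φ x := by
  rcases abs_choice x with h | h <;> rw [h]
  exact Φ.even' x

theorem map_le_of_abs_le {x y : ℝ} (h : |x| ≤ |y|) : Φ x ≤ Φ y := by
  rw [← Φ.map_abs x, ← Φ.map_abs y]
  rcases (abs_nonneg y).eq_or_lt with hy | hy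
  · rw [← hy, le_antisymm (hy ▸ h) (abs_nonneg x)]
  · have hc : |x| / |y| ≤ 1 := (div_le_one hy).2 h
    calc Φ |x| = Φ (|x| / |y| * |y|) := by rw [div_mul_cancel₀ _ hy.ne']
      _ ≤ |x| / |y| * Φ |y| := Φ.map_mul_le (by positivity) hc _
      _ ≤ Φ |y| := mul_le_of_le_one_left (Φ.nonneg _) hc

theorem tendsto_atTop : Tendsto Φ atTop atTop :=
  (Φ.tendsto_atTop'.atTop_mul_atTop₀ tendsto_id).congr'
    ((eventually_ne_atTop 0).mono fun _ hx => div_mul_cancel₀ _ hx)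

variable {μ : Measure X}

theorem integrable_comp {f : X → ℝ} (hf : AEStronglyMeasurable f μ)
    (h : ∫⁻ x, ENNReal.ofReal (Φ (f x)) ∂μ ≠ ∞) : Integrable (fun x => Φ (f x)) μ :=
  ⟨Φ.continuous.comp_aestronglyMeasurable hf,
    (hasFiniteIntegral_iff_ofReal (ae_of_all _ fun _ => Φ.nonneg _)).2 h.lt_top⟩

end YoungFunction

theorem frequently_lt_of_not_youngWeaker {Φ₁ Φ₂ : YoungFunction} (hw : ¬ YoungWeaker Φ₂ Φ₁)
    {a : ℝ} (ha : 0 < a) : ∃ᶠ x in atTop, Φ₁ (a * x) < Φ₂ x := by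
  simp only [YoungWeaker] at hw
  push Not at hw
  refine frequently_atTop.2 fun x₀ => ?_
  obtain ⟨x, hx, hlt⟩ := hw a ha (max x₀ 0) (le_max_right _ _)
  exact ⟨x, (le_max_left _ _).trans hx, hlt⟩

theorem exists_one_le_lt_of_not_youngWeaker {Φ₁ Φ₂ : YoungFunction} (hw : ¬ YoungWeaker Φ₂ Φ₁)
    {a : ℝ} (ha : 0 < a) {c : ℝ≥0∞} (hc : c ≠ ∞) :
    ∃ z : ℝ, 1 ≤ z ∧ c ≤ ENNReal.ofReal (Φ₁ (a * z)) ∧ Φ₁ (a * z) < Φ₂ z := by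
  have hlarge : ∀ᶠ z in atTop, c ≤ ENNReal.ofReal (Φ₁ (a * z)) :=
    ((Φ₁.tendsto_atTop.comp (tendsto_id.const_mul_atTop ha)).eventually_ge_atTop _).mono
      fun z hz => (ENNReal.le_ofReal_iff_toReal_le hc (Φ₁.nonneg _)).2 hz
  exact ((frequently_lt_of_not_youngWeaker hw ha).and_eventually
    ((eventually_ge_atTop 1).and hlarge)).exists.imp fun z ⟨h₁, h₂, h₃⟩ => ⟨h₂, h₃, h₁⟩

theorem ENNReal.tsum_eq_top_of_eventually_le {f : ℕ → ℝ≥0∞} {c : ℝ≥0∞} (hc : c ≠ 0)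
    (h : ∀ᶠ n in atTop, c ≤ f n) : ∑' n, f n = ∞ := by
  by_contra hf
  obtain ⟨n, hlt, hle⟩ := (((ENNReal.tendsto_atTop_zero_of_tsum_ne_top hf).eventually
    (gt_mem_nhds (pos_iff_ne_zero.2 hc))).and h).exists
  exact hlt.not_ge hle

/-- `yₙ` and `tₙ` are the heights and the measures of the steps of a function in `L^{Φ₁}` none of
whose multiples is in `L^{Φ₂}`. They are `yₙ = (n + 1) zₙ` and `tₙ = 1 / Φ₁(2ⁿ yₙ)` with
`Φ₁(2ⁿ yₙ) < Φ₂(zₙ)`: by convexity the factor `2ⁿ` makes `∑ Φ₁(yₙ) tₙ` converge, while the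
factor `n + 1` eventually absorbs any `k > 0`. -/
theorem exists_seq_of_not_youngWeaker {Φ₁ Φ₂ : YoungFunction} (hw : ¬ YoungWeaker Φ₂ Φ₁)
    {m : ℝ≥0∞} (hm : m ≠ 0) :
    ∃ (y : ℕ → ℝ) (t : ℕ → ℝ≥0∞), ∑' n, t n ≤ m ∧
      ∑' n, ENNReal.ofReal (Φ₁ (y n)) * t n ≠ ∞ ∧
      ∀ k > 0, ∑' n, ENNReal.ofReal (Φ₂ (k * y n)) * t n = ∞ := by
  have hz (n : ℕ) := exists_one_le_lt_of_not_youngWeaker hw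
    (by positivity : (0 : ℝ) < 2 ^ n * (n + 1))
    (ENNReal.inv_ne_top.2 (mul_ne_zero hm (by simp) : m * 2⁻¹ ^ (n + 1) ≠ 0))
  choose z hz1 hzm hzlt using hz
  set w : ℕ → ℝ := fun n => 2 ^ n * (n + 1) * z n with hw_def
  have hw0 : ∀ n, ENNReal.ofReal (Φ₁ (w n)) ≠ 0 := fun n =>
    (ENNReal.ofReal_pos.2 (Φ₁.pos (by have := hz1 n; positivity))).ne'
  have hcancel : ∀ n, ENNReal.ofReal (Φ₁ (w n)) * (ENNReal.ofReal (Φ₁ (w n)))⁻¹ = 1 :=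
    fun n => ENNReal.mul_inv_cancel (hw0 n) ENNReal.ofReal_ne_top
  refine ⟨fun n => (n + 1) * z n, fun n => (ENNReal.ofReal (Φ₁ (w n)))⁻¹, ?_, ?_, fun k hk => ?_⟩
  · calc ∑' n, (ENNReal.ofReal (Φ₁ (w n)))⁻¹ ≤ ∑' n : ℕ, m * 2⁻¹ ^ (n + 1) :=
          ENNReal.tsum_le_tsum fun n => ENNReal.inv_le_iff_inv_le.2 (hzm n)
      _ = m := by
          rw [ENNReal.tsum_mul_left, ENNReal.tsum_geometric_add_one, ENNReal.one_sub_inv_two,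
            ENNReal.mul_inv_cancel (by norm_num) (by norm_num), mul_one]
  · refine ne_top_of_le_ne_top (by simp : ∑' n : ℕ, (2⁻¹ : ℝ≥0∞) ^ n ≠ ∞)
      (ENNReal.tsum_le_tsum fun n => ?_)
    have hconv : Φ₁ ((n + 1) * z n) ≤ 2⁻¹ ^ n * Φ₁ (w n) := by
      have h := Φ₁.map_mul_le (c := 2⁻¹ ^ n) (by positivity)
        (pow_le_one₀ (by norm_num) (by norm_num)) (w n)
      rwa [hw_def, ← mul_assoc, ← mul_assoc, ← mul_pow, inv_mul_cancel₀ two_ne_zero, one_pow,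
        one_mul] at h
    calc ENNReal.ofReal (Φ₁ ((n + 1) * z n)) * (ENNReal.ofReal (Φ₁ (w n)))⁻¹
        ≤ 2⁻¹ ^ n * ENNReal.ofReal (Φ₁ (w n)) * (ENNReal.ofReal (Φ₁ (w n)))⁻¹ := by
          gcongr
          refine (ENNReal.ofReal_le_ofReal hconv).trans_eq ?_
          rw [ENNReal.ofReal_mul (by positivity), ENNReal.ofReal_pow (by norm_num),
            ENNReal.ofReal_inv_of_pos two_pos, ENNReal.ofReal_ofNat]
      _ = 2⁻¹ ^ n := by rw [mul_assoc, hcancel, mul_one]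
  · have hlarge : ∀ᶠ n : ℕ in atTop, 1 ≤ k * (n + 1) :=
      ((tendsto_natCast_atTop_atTop.atTop_add tendsto_const_nhds).const_mul_atTop
        hk).eventually_ge_atTop 1
    refine ENNReal.tsum_eq_top_of_eventually_le one_ne_zero (hlarge.mono fun n hn => ?_)
    have hz0 : 0 ≤ z n := zero_le_one.trans (hz1 n)
    have hΦ : Φ₁ (w n) ≤ Φ₂ (k * ((n + 1) * z n)) :=
      (hzlt n).le.trans (Φ₂.map_le_of_abs_le (abs_le_abs_of_nonneg hz0 (by nlinarith)))
    calc 1 = ENNReal.ofReal (Φ₁ (w n)) * (ENNReal.ofReal (Φ₁ (w n)))⁻¹ := (hcancel n).symm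
      _ ≤ ENNReal.ofReal (Φ₂ (k * ((n + 1) * z n))) * (ENNReal.ofReal (Φ₁ (w n)))⁻¹ := by
          gcongr

section StepFunction

variable {α ι : Type*} {B : ι → Set α}

theorem tsum_indicator_apply_of_mem {M : Type*} [AddCommMonoid M] [TopologicalSpace M]
    (hB : Pairwise (Disjoint on B)) (c : ι → M) {n : ι} {x : α} (hx : x ∈ B n) :
    ∑' k, (B k).indicator (fun _ => c k) x = c n := by
  rw [tsum_eq_single n fun k hk =>
    indicator_of_notMem (fun hxk => disjoint_left.1 (hB hk) hxk hx) _, indicator_of_mem hx]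

theorem comp_tsum_indicator_apply (hB : Pairwise (Disjoint on B)) (y : ι → ℝ)
    {φ : ℝ → ℝ≥0∞} (hφ : φ 0 = 0) (x : α) :
    φ (∑' k, (B k).indicator (fun _ => y k) x) = ∑' k, (B k).indicator (fun _ => φ (y k)) x := by
  by_cases hx : ∃ n, x ∈ B n
  · obtain ⟨n, hn⟩ := hx
    rw [tsum_indicator_apply_of_mem hB _ hn, tsum_indicator_apply_of_mem hB _ hn]
  · push Not at hx
    simp [indicator_of_notMem (hx _), hφ]

theorem lintegral_comp_tsum_indicator [MeasurableSpace α] [Countable ι]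
    (hBm : ∀ n, MeasurableSet (B n)) (hB : Pairwise (Disjoint on B)) (y : ι → ℝ)
    {φ : ℝ → ℝ≥0∞} (hφ : φ 0 = 0) (ρ : Measure α) :
    ∫⁻ x, φ (∑' n, (B n).indicator (fun _ => y n) x) ∂ρ = ∑' n, φ (y n) * ρ (B n) := by
  simp_rw [comp_tsum_indicator_apply hB y hφ]
  rw [lintegral_tsum fun n => (measurable_const.indicator (hBm n)).aemeasurable]
  simp_rw [lintegral_indicator_const (hBm _)]

end StepFunction

theorem ENNReal.exists_mem_add_le_two_mul {S : Set ℝ≥0∞} {a : ℝ≥0∞} (ha : a ∈ S)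
    (hS : sSup S ≠ ∞) : ∃ d ∈ S, ∀ e ∈ S, a + e ≤ 2 * d := by
  rcases (le_sSup ha).eq_or_lt with h | h
  · exact ⟨a, ha, fun e he => by rw [two_mul]; gcongr; exact (le_sSup he).trans_eq h.symm⟩
  · have hmid : (a + sSup S) / 2 < sSup S := by
      rw [ENNReal.div_lt_iff (Or.inl two_ne_zero) (Or.inl ENNReal.ofNat_ne_top), mul_two]
      exact ENNReal.add_lt_add_right hS h
    obtain ⟨d, hd, hlt⟩ := lt_sSup_iff.1 hmid
    refine ⟨d, hd, fun e he => ?_⟩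
    rw [ENNReal.div_lt_iff (Or.inl two_ne_zero) (Or.inl ENNReal.ofNat_ne_top), mul_comm] at hlt
    calc a + e ≤ a + sSup S := by gcongr; exact le_sSup he
      _ ≤ 2 * d := hlt.le

section NonAtomic

variable {μ : Measure X} {A : Set X}

/-- The greedy step in the proof of Sierpiński's theorem: `D` takes at least half of the room
left above `C`. -/
theorem exists_superset_add_le_two_mul {C : Set X} {t : ℝ≥0∞} (ht : t ≠ ∞)
    (hCm : MeasurableSet C) (hCA : C ⊆ A) (hCt : μ C ≤ t) :
    ∃ D, MeasurableSet D ∧ C ⊆ D ∧ D ⊆ A ∧ μ D ≤ t ∧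
      ∀ E, MeasurableSet E → C ⊆ E → E ⊆ A → μ E ≤ t → μ C + μ E ≤ 2 * μ D := by
  obtain ⟨_, ⟨D, hD, rfl⟩, hmax⟩ := ENNReal.exists_mem_add_le_two_mul
    (S := μ '' {E | MeasurableSet E ∧ C ⊆ E ∧ E ⊆ A ∧ μ E ≤ t})
    ⟨C, ⟨hCm, subset_rfl, hCA, hCt⟩, rfl⟩
    (ne_top_of_le_ne_top ht (sSup_le (by rintro _ ⟨E, hE, rfl⟩; exact hE.2.2.2)))
  exact ⟨D, hD.1, hD.2.1, hD.2.2.1, hD.2.2.2,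
    fun E h₁ h₂ h₃ h₄ => hmax _ ⟨E, ⟨h₁, h₂, h₃, h₄⟩, rfl⟩⟩

theorem NonAtomicOn.mono {S : Set X} (h : NonAtomicOn μ A) (hS : S ⊆ A) : NonAtomicOn μ S :=
  fun B hB => h B (hB.trans hS)

theorem NonAtomicOn.exists_subset_two_mul_le (hna : NonAtomicOn μ A) (hA : MeasurableSet A)
    (h0 : μ A ≠ 0) : ∃ B ⊆ A, MeasurableSet B ∧ μ B ≠ 0 ∧ 2 * μ B ≤ μ A := by
  have hA' := hna A subset_rfl
  simp only [IsAtomSet, not_and, not_forall, not_or] at hA'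
  obtain ⟨B, hBm, hBA, hB0, hBA'⟩ := hA' hA (pos_iff_ne_zero.2 h0)
  have hsplit : μ (A \ B) + μ B = μ A := by
    rw [← measure_sdiff_add_inter A hBm, inter_eq_right.2 hBA]
  rcases le_total (μ B) (μ (A \ B)) with h | h
  · exact ⟨B, hBA, hBm, hB0, by rw [two_mul, ← hsplit]; gcongr⟩
  · refine ⟨A \ B, sdiff_subset, hA.diff hBm, fun h' => hBA' ?_, by rw [two_mul, ← hsplit]; gcongr⟩
    rw [← hsplit, h', zero_add]

theorem NonAtomicOn.exists_subset_measure_lt (hna : NonAtomicOn μ A) (hA : MeasurableSet A)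
    (h0 : μ A ≠ 0) (hfin : μ A ≠ ∞) {η : ℝ≥0∞} (hη : η ≠ 0) :
    ∃ B ⊆ A, MeasurableSet B ∧ μ B ≠ 0 ∧ μ B < η := by
  have halving : ∀ n : ℕ, ∃ B ⊆ A, MeasurableSet B ∧ μ B ≠ 0 ∧ 2 ^ n * μ B ≤ μ A := by
    intro n
    induction n with
    | zero => exact ⟨A, subset_rfl, hA, h0, by simp⟩
    | succ n ih =>
      obtain ⟨B, hBA, hBm, hB0, hB⟩ := ih
      obtain ⟨C, hCB, hCm, hC0, hC⟩ := (hna.mono hBA).exists_subset_two_mul_le hBm hB0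
      refine ⟨C, hCB.trans hBA, hCm, hC0, ?_⟩
      calc 2 ^ (n + 1) * μ C = 2 ^ n * (2 * μ C) := by ring
        _ ≤ 2 ^ n * μ B := by gcongr
        _ ≤ μ A := hB
  obtain ⟨n, hn⟩ := ENNReal.exists_nat_mul_gt hη hfin
  obtain ⟨B, hBA, hBm, hB0, hB⟩ := halving n
  refine ⟨B, hBA, hBm, hB0, (ENNReal.mul_lt_mul_iff_right (a := 2 ^ n) (by simp) (by simp)).1 ?_⟩
  calc 2 ^ n * μ B ≤ μ A := hB
    _ < n * η := hn
    _ ≤ 2 ^ n * η := by gcongr; exact_mod_cast (Nat.lt_two_pow_self (n := n)).le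

/-- Sierpiński's theorem. -/
theorem NonAtomicOn.exists_subset_measure_eq (hna : NonAtomicOn μ A) (hA : MeasurableSet A)
    (hfin : μ A ≠ ∞) {t : ℝ≥0∞} (ht : t ≤ μ A) : ∃ B ⊆ A, MeasurableSet B ∧ μ B = t := by
  have htfin : t ≠ ∞ := ne_top_of_le_ne_top hfin ht
  choose! step hstep_m hstep_sup hstep_sub hstep_le hstep_max using
    fun C (hC : MeasurableSet C ∧ C ⊆ A ∧ μ C ≤ t) =>
      exists_superset_add_le_two_mul htfin hC.1 hC.2.1 hC.2.2
  set C : ℕ → Set X := fun n => step^[n] ∅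
  have hCsucc : ∀ n, C (n + 1) = step (C n) := fun n => Function.iterate_succ_apply' _ _ _
  have hC : ∀ n, MeasurableSet (C n) ∧ C n ⊆ A ∧ μ (C n) ≤ t := by
    intro n
    induction n with
    | zero => exact ⟨MeasurableSet.empty, empty_subset A, by simp [C]⟩
    | succ n ih => rw [hCsucc]; exact ⟨hstep_m _ ih, hstep_sub _ ih, hstep_le _ ih⟩
  have hmono : Monotone C := monotone_nat_of_le_succ fun n => hCsucc n ▸ hstep_sup _ (hC n)
  have hLm : MeasurableSet (⋃ n, C n) := .iUnion fun n => (hC n).1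
  have hLt : μ (⋃ n, C n) ≤ t := by
    rw [hmono.measure_iUnion]
    exact iSup_le fun n => (hC n).2.2
  refine ⟨⋃ n, C n, iUnion_subset fun n => (hC n).2.1, hLm, hLt.antisymm (not_lt.1 fun hlt => ?_)⟩
  obtain ⟨D, hD, hDm, hD0, hDlt⟩ := (hna.mono sdiff_subset).exists_subset_measure_lt (hA.diff hLm)
    ((tsub_pos_of_lt (hlt.trans_le ht)).trans_le le_measure_sdiff).ne'
    (ne_top_of_le_ne_top hfin (measure_mono sdiff_subset)) (tsub_pos_of_lt hlt).ne'
  -- `C n ∪ D` is a candidate at every step, so each step gains at least `μ D / 2`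
  have hgrow : ∀ n, 2 * μ (C n) + μ D ≤ 2 * μ (C (n + 1)) := by
    intro n
    have hunion : μ (C n ∪ D) = μ (C n) + μ D :=
      measure_union (disjoint_left.2 fun x hx hxD => (hD hxD).2 (mem_iUnion.2 ⟨n, hx⟩)) hDm
    have hroom : μ (C n ∪ D) ≤ t := by
      rw [hunion]
      exact (add_le_add_left (measure_mono (subset_iUnion C n)) _).trans
        (lt_tsub_iff_left.1 hDlt).le
    have h := hstep_max (C n) (hC n) (C n ∪ D) ((hC n).1.union hDm) subset_union_left
      (union_subset (hC n).2.1 (hD.trans sdiff_subset)) hroom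
    rwa [hunion, ← add_assoc, ← two_mul, ← hCsucc] at h
  have hlin : ∀ n : ℕ, n * μ D ≤ 2 * μ (C n) := by
    intro n
    induction n with
    | zero => simp
    | succ n ih =>
      calc ((n + 1 : ℕ) : ℝ≥0∞) * μ D = n * μ D + μ D := by push_cast; ring
        _ ≤ 2 * μ (C n) + μ D := by gcongr
        _ ≤ 2 * μ (C (n + 1)) := hgrow n
  obtain ⟨n, hn⟩ :=
    ENNReal.exists_nat_mul_gt hD0 (ENNReal.mul_ne_top (by norm_num : (2 : ℝ≥0∞) ≠ ∞) htfin)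
  exact (hn.trans_le (hlin n)).not_ge (by gcongr; exact (hC n).2.2)

theorem NonAtomicOn.exists_pairwise_disjoint_measure_eq (hna : NonAtomicOn μ A)
    (hA : MeasurableSet A) (hfin : μ A ≠ ∞) {t : ℕ → ℝ≥0∞} (ht : ∑' n, t n ≤ μ A) :
    ∃ B : ℕ → Set X, (∀ n, MeasurableSet (B n)) ∧ (∀ n, B n ⊆ A) ∧
      Pairwise (Disjoint on B) ∧ ∀ n, μ (B n) = t n := by
  choose! piece hpiece_sub hpiece_m hpiece_μ using
    fun R (hR : R ⊆ A ∧ MeasurableSet R) (s : ℝ≥0∞) (hs : s ≤ μ R) =>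
      (hna.mono hR.1).exists_subset_measure_eq hR.2
        (ne_top_of_le_ne_top hfin (measure_mono hR.1)) hs
  set R : ℕ → Set X := fun n => Nat.rec A (fun k Rk => Rk \ piece Rk (t k)) n
  have hRsucc : ∀ n, R (n + 1) = R n \ piece (R n) (t n) := fun n => rfl
  have hroom : ∀ n, μ (R n) + ∑ k ∈ Finset.range n, t k = μ A → t n ≤ μ (R n) := by
    intro n h
    refine ENNReal.le_of_add_le_add_left (ne_top_of_le_ne_top hfin (h ▸ le_add_self)) ?_
    calc ∑ k ∈ Finset.range n, t k + t n = ∑ k ∈ Finset.range (n + 1), t k :=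
          (Finset.sum_range_succ _ _).symm
      _ ≤ μ A := (ENNReal.sum_le_tsum _).trans ht
      _ = _ := by rw [← h, add_comm]
  have hR : ∀ n, (R n ⊆ A ∧ MeasurableSet (R n)) ∧ μ (R n) + ∑ k ∈ Finset.range n, t k = μ A := by
    intro n
    induction n with
    | zero => exact ⟨⟨subset_rfl, hA⟩, by simp [R]⟩
    | succ n ih =>
      have htn := hroom n ih.2
      have hPm := hpiece_m _ ih.1 _ htn
      have hsplit := measure_sdiff_add_inter (μ := μ) (R n) hPm
      rw [inter_eq_right.2 (hpiece_sub _ ih.1 _ htn), hpiece_μ _ ih.1 _ htn] at hsplit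
      refine ⟨⟨sdiff_subset.trans ih.1.1, ih.1.2.diff hPm⟩, ?_⟩
      rw [hRsucc, Finset.sum_range_succ, add_comm _ (t n), ← add_assoc, hsplit, ih.2]
  have hRanti : Antitone R := antitone_nat_of_succ_le fun n => (hRsucc n).trans_subset sdiff_subset
  have htR (n : ℕ) : t n ≤ μ (R n) := hroom n (hR n).2
  refine ⟨fun n => piece (R n) (t n), fun n => hpiece_m _ (hR n).1 _ (htR n),
    fun n => (hpiece_sub _ (hR n).1 _ (htR n)).trans (hR n).1.1,
    (pairwise_disjoint_on _).2 fun m n hmn => disjoint_left.2 fun x hxm hxn => ?_,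
    fun n => hpiece_μ _ (hR n).1 _ (htR n)⟩
  exact (hRanti hmn (hpiece_sub _ (hR n).1 _ (htR n) hxn)).2 hxm

theorem NonAtomicOn.exists_memOrlicz_lintegral_eq_top {Φ₁ Φ₂ : YoungFunction}
    (hw : ¬ YoungWeaker Φ₂ Φ₁) (hna : NonAtomicOn μ A) (hA : MeasurableSet A) (hA0 : μ A ≠ 0)
    (hfin : μ A ≠ ∞) :
    ∃ g : X → ℝ, Measurable g ∧ MemOrlicz Φ₁ μ g ∧
      ∀ k > 0, ∫⁻ x in A, ENNReal.ofReal (Φ₂ (k * g x)) ∂μ = ∞ := by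
  obtain ⟨y, t, ht, hΦ₁, hΦ₂⟩ := exists_seq_of_not_youngWeaker hw hA0
  obtain ⟨B, hBm, hBA, hB, hμB⟩ := hna.exists_pairwise_disjoint_measure_eq hA hfin ht
  have hgm : Measurable fun x => ∑' n, (B n).indicator (fun _ => y n) x :=
    Measurable.tsum fun n => measurable_const.indicator (hBm n)
  have hmodular : ∀ (Φ : YoungFunction) (k : ℝ) (ρ : Measure X),
      ∫⁻ x, ENNReal.ofReal (Φ (k * ∑' n, (B n).indicator (fun _ => y n) x)) ∂ρ =
        ∑' n, ENNReal.ofReal (Φ (k * y n)) * ρ (B n) := fun Φ k ρ =>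
    lintegral_comp_tsum_indicator hBm hB y (φ := fun s => ENNReal.ofReal (Φ (k * s)))
      (by simp [Φ.map_zero]) ρ
  refine ⟨_, hgm, ⟨hgm.aestronglyMeasurable, 1, one_pos, Φ₁.integrable_comp
    (hgm.const_mul 1).aestronglyMeasurable ?_⟩, fun k _ => ?_⟩
  · simp only [hmodular]
    simpa [hμB] using hΦ₁
  · rw [hmodular]
    simpa [Measure.restrict_apply (hBm _), inter_eq_left.2 (hBA _), hμB] using hΦ₂ k ‹_›

end NonAtomic

theorem MeasureTheory.Measure.AbsolutelyContinuous.exists_smul_restrict_le {μ ν : Measure X}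
    [SigmaFinite μ] [SFinite ν] (hνμ : ν ≪ μ) (hν : ν ≠ 0) :
    ∃ δ : ℝ≥0∞, δ ≠ 0 ∧ ∃ A, MeasurableSet A ∧ μ A ≠ 0 ∧ δ • μ.restrict A ≤ ν := by
  have hwν : μ.withDensity (ν.rnDeriv μ) = ν := Measure.withDensity_rnDeriv_eq ν μ hνμ
  have hw0 : μ {x | ν.rnDeriv μ x ≠ 0} ≠ 0 := fun h => hν <| by
    rw [← hwν, withDensity_congr_ae (g := 0) (ae_iff.2 h), withDensity_zero]
  have hcover : {x | ν.rnDeriv μ x ≠ 0} ⊆ ⋃ n : ℕ, {x | (n : ℝ≥0∞)⁻¹ ≤ ν.rnDeriv μ x} :=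
    fun x hx => mem_iUnion.2 ((ENNReal.exists_inv_nat_lt hx).imp fun _ => le_of_lt)
  obtain ⟨n, hn⟩ :=
    exists_measure_pos_of_not_measure_iUnion_null fun h => hw0 (measure_mono_null hcover h)
  have hAm : MeasurableSet {x | (n : ℝ≥0∞)⁻¹ ≤ ν.rnDeriv μ x} :=
    measurableSet_le measurable_const (Measure.measurable_rnDeriv ν μ)
  refine ⟨(n : ℝ≥0∞)⁻¹, ENNReal.inv_ne_zero.2 (ENNReal.natCast_ne_top n), _, hAm, hn.ne', ?_⟩
  calc (n : ℝ≥0∞)⁻¹ • μ.restrict {x | (n : ℝ≥0∞)⁻¹ ≤ ν.rnDeriv μ x}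
      = μ.withDensity ({x | (n : ℝ≥0∞)⁻¹ ≤ ν.rnDeriv μ x}.indicator fun _ => (n : ℝ≥0∞)⁻¹) := by
        rw [withDensity_indicator hAm, withDensity_const]
    _ ≤ μ.withDensity (ν.rnDeriv μ) := withDensity_mono (ae_of_all _ (indicator_le fun _ hx => hx))
    _ = ν := hwν

theorem exists_pos_measure_le_abs_of_not_ae_eq_zero {μ : Measure X} {u : X → ℝ}
    (h : ¬ u =ᵐ[μ] 0) : ∃ ε > 0, μ {x | ε ≤ |u x|} ≠ 0 := by
  have hcover : {x | u x ≠ 0} ⊆ ⋃ n : ℕ, {x | 1 / ((n : ℝ) + 1) ≤ |u x|} :=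
    fun x hx => mem_iUnion.2 ((exists_nat_one_div_lt (abs_pos.2 hx)).imp fun _ => le_of_lt)
  obtain ⟨n, hn⟩ := exists_measure_pos_of_not_measure_iUnion_null fun h0 =>
    h (ae_iff.2 (measure_mono_null hcover h0))
  exact ⟨_, Nat.one_div_pos_of_nat, hn.ne'⟩

theorem ae_eq_zero_of_forall_memOrlicz {μ : Measure X} [SigmaFinite μ]
    (hna : NonAtomicOn μ univ) {Φ₁ Φ₂ : YoungFunction} (hw : ¬ YoungWeaker Φ₂ Φ₁) {T : X → X}
    (hT : Measurable T) (hns : μ.map T ≪ μ) {u : X → ℝ} (hu : Measurable u)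
    (hmaps : ∀ g, MemOrlicz Φ₁ μ g → MemOrlicz Φ₂ μ fun x => u x * g (T x)) : u =ᵐ[μ] 0 := by
  by_contra hu0
  obtain ⟨ε, hε, hF⟩ := exists_pos_measure_le_abs_of_not_ae_eq_zero hu0
  set F := {x | ε ≤ |u x|}
  set ν := (μ.restrict F).map T
  have hνμ : ν ≪ μ :=
    ((Measure.absolutelyContinuous_of_le Measure.restrict_le_self).map hT).trans hns
  have hν : ν ≠ 0 := fun h => hF <| by
    rw [← Measure.restrict_apply_univ, ← preimage_univ (f := T), ← Measure.map_apply hT .univ]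
    exact congrArg (· univ) h
  obtain ⟨δ, hδ, A', hA'm, hA'0, hA'ν⟩ := hνμ.exists_smul_restrict_le hν
  obtain ⟨A, hAm, hAA', hA0, hAfin⟩ :=
    Measure.exists_subset_measure_lt_top hA'm (pos_iff_ne_zero.2 hA'0)
  have hAν : δ • μ.restrict A ≤ ν := le_trans (by gcongr) hA'ν
  obtain ⟨g, hgm, hg, hgA⟩ := (hna.mono (subset_univ A)).exists_memOrlicz_lintegral_eq_top hw hAm
    hA0.ne' hAfin.ne
  obtain ⟨-, k, hk, hint⟩ := hmaps g hg
  refine hint.lintegral_lt_top.ne (eq_top_iff.2 ?_)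
  calc ∞ = δ * ∫⁻ x in A, ENNReal.ofReal (Φ₂ (k * ε * g x)) ∂μ := by
        rw [hgA _ (by positivity), ENNReal.mul_top hδ]
    _ = ∫⁻ x, ENNReal.ofReal (Φ₂ (k * ε * g x)) ∂(δ • μ.restrict A) :=
        (lintegral_smul_measure δ _).symm
    _ ≤ ∫⁻ x, ENNReal.ofReal (Φ₂ (k * ε * g x)) ∂ν := lintegral_mono' hAν le_rfl
    _ = ∫⁻ x in F, ENNReal.ofReal (Φ₂ (k * ε * g (T x))) ∂μ := lintegral_map (by fun_prop) hT
    _ ≤ ∫⁻ x in F, ENNReal.ofReal (Φ₂ (k * (u x * g (T x)))) ∂μ := by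
        refine setLIntegral_mono (by fun_prop) fun x hx => ENNReal.ofReal_le_ofReal ?_
        refine Φ₂.map_le_of_abs_le ?_
        rw [mul_assoc, abs_mul, abs_mul, abs_mul, abs_mul, abs_of_pos hε]
        gcongr
        exact hx
    _ ≤ ∫⁻ x, ENNReal.ofReal (Φ₂ (k * (u x * g (T x)))) ∂μ := setLIntegral_le_lintegral _ _

/-- over a non-atomic measure space, when `Φ₂ ⊀ Φ₁` the only bounded
weighted composition operator `M_{u,T} f = u·(f∘T)` is the zero operator. -/
theorem weighted_composition_zero_of_nonatomic
    {X : Type*} [MeasurableSpace X] (μ : Measure X) [SigmaFinite μ]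
    (hna : NonAtomicOn μ Set.univ)
    (Φ₁ Φ₂ : YoungFunction) (hw : ¬ YoungWeaker Φ₂ Φ₁)
    (T : X → X) (hT : Measurable T) (hns : μ.map T ≪ μ)
    (u : X → ℝ) (hu : Measurable u)
    (hb : OrliczBounded Φ₁ Φ₂ μ (fun f x => u x * f (T x))) :
    ∀ f : X → ℝ, MemOrlicz Φ₁ μ f →
      (fun x => u x * f (T x)) =ᵐ[μ] (0 : X → ℝ) := by
  obtain ⟨_, -, hbounded⟩ := hb
  have hu0 : u =ᵐ[μ] 0 :=
    ae_eq_zero_of_forall_memOrlicz hna hw hT hns hu fun g hg => (hbounded g hg).1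
  intro f _
  filter_upwards [hu0] with x hx
  simp [hx]
end

section
/- Let Φ₁, Φ₂, Φ₃ be Young functions satisfying Φ₂(xy) ≤ Φ₁(x) + Φ₃(y) for all x, y ≥ 0. Then Φ₁ is not weaker than Φ₂; that is, there do not exist a > 0 and x₀ ≥ 0 with Φ₁(x) ≤ Φ₂(ax) for all x ≥ x₀. -/
open MeasureTheory Filter Topology

variable {X : Type*} [MeasurableSpace X]

/-- if `Φ₂(xy) ≤ Φ₁(x) + Φ₃(y)` then `Φ₁` is not weaker than `Φ₂`. -/
theorem not_weaker_of_young_ineq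
    (Φ₁ Φ₂ Φ₃ : YoungFunction)
    (hΦ : ∀ x y : ℝ, 0 ≤ x → 0 ≤ y → Φ₂ (x * y) ≤ Φ₁ x + Φ₃ y) :
    ¬ YoungWeaker Φ₁ Φ₂ := by
  rintro ⟨a, ha, x₀, hx₀, hle⟩
  have h20 : Φ₂.toFun 0 = 0 := (Φ₂.zero_iff' 0).mpr rfl
  have hdouble : ∀ u : ℝ, 2 * Φ₂.toFun u ≤ Φ₂.toFun (2 * u) := by
    intro u
    have h := Φ₂.convexOn'.2 (Set.mem_univ (2*u)) (Set.mem_univ (0:ℝ))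
      (by norm_num : (0:ℝ) ≤ 1/2) (by norm_num : (0:ℝ) ≤ 1/2) (by norm_num)
    simp only [smul_eq_mul, mul_zero, add_zero, h20] at h
    have he : (1/2:ℝ) * (2*u) = u := by ring
    rw [he] at h
    linarith
  -- Φ₃ is nonnegative
  have hM : 0 ≤ Φ₃.toFun (2*a) := by
    have h30 : Φ₃.toFun 0 = 0 := (Φ₃.zero_iff' 0).mpr rfl
    have h := Φ₃.convexOn'.2 (Set.mem_univ (2*a)) (Set.mem_univ (-(2*a)))
      (by norm_num : (0:ℝ) ≤ 1/2) (by norm_num : (0:ℝ) ≤ 1/2) (by norm_num)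
    have he : (1/2:ℝ) • (2*a) + (1/2:ℝ) • (-(2*a)) = 0 := by
      simp [smul_eq_mul]
    rw [he, h30, Φ₃.even'] at h
    simp only [smul_eq_mul] at h
    linarith
  set M := Φ₃.toFun (2*a) with hMdef
  have key : ∀ x, x₀ ≤ x → Φ₂.toFun (a*x) ≤ M := by
    intro x hx
    have hx0 : 0 ≤ x := le_trans hx₀ hx
    have h1 := hΦ x (2*a) hx0 (by linarith)
    rw [show x*(2*a) = 2*(a*x) by ring] at h1
    have h2 := hle x hx
    have h3 := hdouble (a*x)
    linarith
  -- contradiction using superlinear growth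
  obtain ⟨u₀, hu₀⟩ := eventually_atTop.1 (Φ₂.tendsto_atTop'.eventually_ge_atTop (M+1))
  set u : ℝ := max u₀ (max 1 (a*x₀)) with hu
  have hu1 : (1:ℝ) ≤ u := le_trans (le_max_left 1 (a*x₀)) (le_max_right _ _)
  have hupos : 0 < u := lt_of_lt_of_le one_pos hu1
  have hx : x₀ ≤ u / a := by
    rw [le_div_iff₀ ha]
    calc x₀ * a = a * x₀ := by ring
    _ ≤ u := le_trans (le_max_right 1 (a*x₀)) (le_max_right _ _)
  have hau : a * (u / a) = u := by field_simp
  have h1 : Φ₂.toFun u ≤ M := by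
    have := key (u/a) hx
    rwa [hau] at this
  have h2 : M + 1 ≤ Φ₂.toFun u / u := hu₀ u (le_max_left _ _)
  have h3 : (M+1) * u ≤ Φ₂.toFun u := (le_div_iff₀ hupos).mp h2
  nlinarith
end

section
/- Let Φ₁, Φ₂, Φ₃ be Young functions with Φ₂(xy) ≤ Φ₁(x) + Φ₃(y) for all x, y ≥ 0. Then for all x ≥ 0, Φ₁⁻¹(x)·Φ₃⁻¹(x) ≤ Φ₂⁻¹(2x) ≤ 2Φ₂⁻¹(x). -/
open MeasureTheory Filter Topology

variable {X : Type*} [MeasurableSpace X]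

lemma YoungFunction.map_zero_s4 (Φ : YoungFunction) : Φ 0 = 0 := (Φ.zero_iff' 0).2 rfl

lemma yInv_mem (Φ : YoungFunction) {y : ℝ} (hy : 0 ≤ y) :
    yInv Φ y ∈ {x : ℝ | 0 ≤ x ∧ Φ x ≤ y} := by
  have hne : ({x : ℝ | 0 ≤ x ∧ Φ x ≤ y}).Nonempty :=
    ⟨0, le_refl 0, by rw [Φ.map_zero_s4]; exact hy⟩
  obtain ⟨M, hM⟩ := (Filter.tendsto_atTop.mp Φ.tendsto_atTop' (y + 1)).exists_forall_of_atTop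
  set B := max M 1 with hB
  have hsub : {x : ℝ | 0 ≤ x ∧ Φ x ≤ y} ⊆ Set.Icc 0 B := by
    intro x hx
    refine ⟨hx.1, ?_⟩
    by_contra h
    push_neg at h
    have hxM : M ≤ x := le_trans (le_max_left M 1) h.le
    have hx1 : (1 : ℝ) ≤ x := le_trans (le_max_right M 1) h.le
    have := hM x hxM
    have hx0 : (0 : ℝ) < x := lt_of_lt_of_le one_pos hx1
    have h1 : (y + 1) * x ≤ Φ x := by
      rw [← le_div_iff₀ hx0]
      exact this
    have h2 : y + 1 ≤ (y + 1) * x := by nlinarith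
    linarith [hx.2]
  have hclosed : IsClosed {x : ℝ | 0 ≤ x ∧ Φ x ≤ y} := by
    have : {x : ℝ | 0 ≤ x ∧ Φ x ≤ y} = Set.Ici 0 ∩ Φ.toFun ⁻¹' Set.Iic y := rfl
    rw [this]
    exact isClosed_Ici.inter (IsClosed.preimage Φ.continuous' isClosed_Iic)
  have hcomp : IsCompact {x : ℝ | 0 ≤ x ∧ Φ x ≤ y} :=
    isCompact_Icc.of_isClosed_subset hclosed hsub
  exact hcomp.sSup_mem hne

/-- the inverse-function inequality `Φ₁⁻¹(x)Φ₃⁻¹(x) ≤ Φ₂⁻¹(2x) ≤ 2Φ₂⁻¹(x)`. -/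
theorem yInv_mul_le
    (Φ₁ Φ₂ Φ₃ : YoungFunction)
    (hΦ : ∀ x y : ℝ, 0 ≤ x → 0 ≤ y → Φ₂ (x * y) ≤ Φ₁ x + Φ₃ y) :
    ∀ x : ℝ, 0 ≤ x →
      yInv Φ₁ x * yInv Φ₃ x ≤ yInv Φ₂ (2 * x) ∧ yInv Φ₂ (2 * x) ≤ 2 * yInv Φ₂ x := by
  intro x hx
  have h2x : (0:ℝ) ≤ 2 * x := by linarith
  obtain ⟨ha0, ha⟩ := yInv_mem Φ₁ hx
  obtain ⟨hb0, hb⟩ := yInv_mem Φ₃ hx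
  obtain ⟨hc0, hc⟩ := yInv_mem Φ₂ h2x
  have hbdd : BddAbove {z : ℝ | 0 ≤ z ∧ Φ₂ z ≤ 2 * x} := by
    obtain ⟨M, hM⟩ := (Filter.tendsto_atTop.mp Φ₂.tendsto_atTop' (2 * x + 1)).exists_forall_of_atTop
    refine ⟨max M 1, fun z hz => ?_⟩
    by_contra h
    push_neg at h
    have hzM : M ≤ z := le_trans (le_max_left M 1) h.le
    have hz1 : (1:ℝ) ≤ z := le_trans (le_max_right M 1) h.le
    have hz0 : (0:ℝ) < z := lt_of_lt_of_le one_pos hz1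
    have h1 : (2 * x + 1) * z ≤ Φ₂ z := by
      rw [← le_div_iff₀ hz0]; exact hM z hzM
    nlinarith [hz.2]
  have hbddx : BddAbove {z : ℝ | 0 ≤ z ∧ Φ₂ z ≤ x} := by
    refine BddAbove.mono ?_ hbdd
    intro z hz
    exact ⟨hz.1, by linarith [hz.2]⟩
  constructor
  · -- yInv Φ₁ x * yInv Φ₃ x ∈ S₂(2x)
    apply le_csSup hbdd
    exact ⟨mul_nonneg ha0 hb0, le_trans (hΦ _ _ ha0 hb0) (by linarith)⟩
  · -- Φ₂ (c/2) ≤ x by convexity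
    have hhalf : Φ₂ (yInv Φ₂ (2 * x) / 2) ≤ x := by
      have := Φ₂.convexOn'.2 (Set.mem_univ (yInv Φ₂ (2 * x))) (Set.mem_univ (0:ℝ))
        (by norm_num : (0:ℝ) ≤ 1/2) (by norm_num : (0:ℝ) ≤ 1/2) (by norm_num)
      simp only [smul_eq_mul, mul_zero, add_zero, Φ₂.map_zero_s4] at this
      have heq : (1/2 : ℝ) * yInv Φ₂ (2 * x) = yInv Φ₂ (2 * x) / 2 := by ring
      rw [heq] at this
      linarith
    have : yInv Φ₂ (2 * x) / 2 ≤ yInv Φ₂ x :=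
      le_csSup hbddx ⟨by linarith, hhalf⟩
    linarith
end
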